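/- arXiv:1007.0156 — 3 statements merged into one kernel-verified Lean document; each statement's English description precedes it below -/
import Mathlib

section
/- Let b ≥ 1 and let P : ℝ^b → ℂ be a polynomial function (its real and imaginary parts are polynomials) that is not identically constant. Then there exist constants C, c > 0 such that for every ε ∈ (0,1), the Lebesgue measure of the set {a ∈ (0,1]^b : |P(a)| < ε} is at most C ε^c. -/
open MeasureTheory Polynomial ENNReal

namespace NLSQP

/-- the unit half-open cube `(0,1]^b`. -/
def box01 (b : ℕ) : Set (Fin b → ℝ) := {a | ∀ k, a k ∈ Set.Ioc (0:ℝ) 1}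


lemma box01_eq (b : ℕ) : box01 b = Set.univ.pi fun _ => Set.Ioc (0:ℝ) 1 := by
  ext a; simp [box01, Set.mem_pi]

lemma box01_measurable (b : ℕ) : MeasurableSet (box01 b) := by
  rw [box01_eq]; exact MeasurableSet.univ_pi fun _ => measurableSet_Ioc

lemma box01_volume (b : ℕ) : volume (box01 b) = 1 := by
  rw [box01_eq, volume_pi_pi]; simp

lemma const_sub (b : ℕ) (r : ℝ) (hr : r ≠ 0) (δ : ℝ) (hδ : δ ∈ Set.Ioo (0:ℝ) 1) :
    volume {s : Fin b → ℝ | s ∈ box01 b ∧ |r| < δ} ≤ ENNReal.ofReal (|r|⁻¹ * δ ^ (1:ℝ)) := by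
  have hr0 : 0 < |r| := abs_pos.mpr hr
  rcases le_or_gt δ |r| with h | h
  · have : {s : Fin b → ℝ | s ∈ box01 b ∧ |r| < δ} = ∅ := by
      ext s; simp only [Set.mem_setOf_eq, Set.mem_empty_iff_false, iff_false, not_and, not_lt]
      intro _; exact h
    rw [this]; simp
  · calc volume {s : Fin b → ℝ | s ∈ box01 b ∧ |r| < δ}
        ≤ volume (box01 b) := measure_mono fun s hs => hs.1
      _ = 1 := box01_volume b
      _ ≤ ENNReal.ofReal (|r|⁻¹ * δ ^ (1:ℝ)) := by
          rw [Real.rpow_one]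
          rw [ENNReal.one_le_ofReal, ← div_eq_inv_mul, le_div_iff₀ hr0]
          linarith

lemma pow_card_le_prod' (r : ℝ) (hr : 0 ≤ r) (s : Multiset ℝ) (h : ∀ x ∈ s, r ≤ x) :
    r ^ Multiset.card s ≤ s.prod := by
  induction s using Multiset.induction_on with
  | empty => simp
  | cons a t ih =>
      simp only [Multiset.card_cons, Multiset.prod_cons, pow_succ]
      rw [mul_comm]
      exact mul_le_mul (h a (Multiset.mem_cons_self a t))
        (ih fun x hx => h x (Multiset.mem_cons_of_mem hx)) (pow_nonneg hr _)
        (le_trans hr (h a (Multiset.mem_cons_self a t)))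

lemma oneDim (p : Polynomial ℝ) (d : ℕ) (hd : p.natDegree = d) (hd1 : 1 ≤ d)
    (δ ε : ℝ) (hδ : 0 < δ) (hε : 0 < ε) (hlead : δ ≤ |p.leadingCoeff|) :
    volume {x : ℝ | |p.eval x| < ε} ≤ ENNReal.ofReal (2 * d * (ε / δ) ^ ((d : ℝ)⁻¹)) := by
  have hp0 : p ≠ 0 := by
    intro h; rw [h, natDegree_zero] at hd; omega
  set q := p.map (algebraMap ℝ ℂ) with hq
  have hq0 : q ≠ 0 := Polynomial.map_ne_zero hp0
  have hsp : q.Splits := IsAlgClosed.splits q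
  have hcard : Multiset.card q.roots = d := by
    rw [(splits_iff_card_roots).mp hsp, hq, natDegree_map, hd]
  set r := (ε / δ) ^ ((d : ℝ)⁻¹) with hrdef
  have hq1 : 0 < ε / δ := div_pos hε hδ
  have hr0 : 0 < r := Real.rpow_pos_of_pos hq1 _
  have hrd : r ^ d = ε / δ := by
    rw [hrdef, ← Real.rpow_natCast ((ε / δ) ^ ((d:ℝ)⁻¹)) d, ← Real.rpow_mul hq1.le,
      inv_mul_cancel₀ (by positivity : (d:ℝ) ≠ 0), Real.rpow_one]
  have hsub : {x : ℝ | |p.eval x| < ε} ⊆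
      ⋃ z ∈ q.roots.toFinset, Set.Ioo (z.re - r) (z.re + r) := by
    intro x hx
    by_contra hc
    simp only [Set.mem_iUnion, Multiset.mem_toFinset, not_exists] at hc
    have hbig : ∀ z ∈ q.roots, r ≤ ‖(x : ℂ) - z‖ := by
      intro z hz
      have h1 : x ∉ Set.Ioo (z.re - r) (z.re + r) := hc z hz
      have h2 : r ≤ |x - z.re| := by
        simp only [Set.mem_Ioo, not_and_or, not_lt] at h1
        rcases h1 with h1 | h1
        · exact le_abs.mpr (Or.inr (by linarith))
        · exact le_abs.mpr (Or.inl (by linarith))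
      calc r ≤ |x - z.re| := h2
        _ = |((x : ℂ) - z).re| := by simp
        _ ≤ ‖(x : ℂ) - z‖ := Complex.abs_re_le_norm _
    have heval : ‖q.eval (x : ℂ)‖ = |p.eval x| := by
      rw [hq, Polynomial.eval_map]
      have : p.eval₂ (algebraMap ℝ ℂ) ((algebraMap ℝ ℂ) x) = algebraMap ℝ ℂ (p.eval x) :=
        Polynomial.eval₂_at_apply _ _
      simp only [Complex.coe_algebraMap] at this ⊢
      rw [this, Complex.norm_real, Real.norm_eq_abs]
    have hfac := hsp.eq_prod_roots
    have habs : ‖q.eval (x : ℂ)‖ =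
        ‖q.leadingCoeff‖ * (q.roots.map fun z => ‖(x : ℂ) - z‖).prod := by
      have hn : ∀ m : Multiset ℂ, ‖m.prod‖ = (m.map (‖·‖)).prod :=
        fun m => map_multiset_prod (normHom (α := ℂ)) m
      conv_lhs => rw [hfac]
      rw [eval_mul, eval_C, norm_mul, Polynomial.eval_multiset_prod, hn,
        Multiset.map_map, Multiset.map_map]
      simp [Function.comp]
    have hleadq : ‖q.leadingCoeff‖ = |p.leadingCoeff| := by
      rw [hq, Polynomial.leadingCoeff_map_of_injective (algebraMap ℝ ℂ).injective]
      exact Complex.norm_real _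
    have hprod : r ^ d ≤ (q.roots.map fun z => ‖(x : ℂ) - z‖).prod := by
      have := pow_card_le_prod' r hr0.le (q.roots.map fun z => ‖(x : ℂ) - z‖)
        (by intro y hy
            obtain ⟨z, hz, rfl⟩ := Multiset.mem_map.mp hy
            exact hbig z hz)
      rwa [Multiset.card_map, hcard] at this
    have : ε ≤ |p.eval x| := by
      calc ε = δ * (ε / δ) := by field_simp
        _ ≤ |p.leadingCoeff| * (r ^ d) := by
            rw [hrd]; exact mul_le_mul_of_nonneg_right hlead hq1.le
        _ ≤ |p.leadingCoeff| * (q.roots.map fun z => ‖(x : ℂ) - z‖).prod := by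
            apply mul_le_mul_of_nonneg_left hprod (abs_nonneg _)
        _ = ‖q.eval (x : ℂ)‖ := by rw [habs, hleadq]
        _ = |p.eval x| := heval
    exact absurd hx (by simp only [Set.mem_setOf_eq, not_lt]; exact this)
  calc volume {x : ℝ | |p.eval x| < ε}
      ≤ volume (⋃ z ∈ q.roots.toFinset, Set.Ioo (z.re - r) (z.re + r)) := measure_mono hsub
    _ ≤ ∑ z ∈ q.roots.toFinset, volume (Set.Ioo (z.re - r) (z.re + r)) :=
        measure_biUnion_finset_le _ _
    _ = ∑ _z ∈ q.roots.toFinset, ENNReal.ofReal (2 * r) := by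
        apply Finset.sum_congr rfl
        intro z _
        rw [Real.volume_Ioo]
        congr 1
        ring
    _ = (q.roots.toFinset.card : ℝ≥0∞) * ENNReal.ofReal (2 * r) := by
        rw [Finset.sum_const, nsmul_eq_mul]
    _ ≤ (d : ℝ≥0∞) * ENNReal.ofReal (2 * r) := by
        apply mul_le_mul_left
        exact_mod_cast le_trans (Multiset.toFinset_card_le _) (le_of_eq hcard)
    _ = ENNReal.ofReal (2 * d * r) := by
        rw [← ENNReal.ofReal_natCast d, ← ENNReal.ofReal_mul (by positivity)]
        congr 1
        ring

lemma mv_sublevel : ∀ (b : ℕ) (g : MvPolynomial (Fin b) ℝ), g ≠ 0 →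
    ∃ C c : ℝ, 0 < C ∧ 0 < c ∧ ∀ δ : ℝ, δ ∈ Set.Ioo (0:ℝ) 1 →
      volume {s : Fin b → ℝ | s ∈ box01 b ∧ |MvPolynomial.eval s g| < δ} ≤
        ENNReal.ofReal (C * δ ^ c) := by
  intro b
  induction b with
  | zero =>
      intro g hg
      obtain ⟨r, rfl⟩ := MvPolynomial.C_surjective (Fin 0) g
      have hr : r ≠ 0 := fun h => hg (by rw [h, map_zero])
      refine ⟨|r|⁻¹, 1, by positivity, one_pos, fun δ hδ => ?_⟩
      simpa [MvPolynomial.eval_C] using const_sub 0 r hr δ hδ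
  | succ b IH =>
      intro Q hQ
      set q := MvPolynomial.finSuccEquiv ℝ b Q with hqdef
      have hq0 : q ≠ 0 := fun h => hQ ((map_eq_zero_iff _ (AlgEquiv.injective _)).mp h)
      set e := MeasurableEquiv.piFinSuccAbove (fun _ : Fin (b+1) => ℝ) 0 with hedef
      set F : ℝ × (Fin b → ℝ) → ℝ :=
        fun p => Polynomial.eval p.1 (q.map (MvPolynomial.eval p.2)) with hFdef
      have hF : ∀ a : Fin (b+1) → ℝ, MvPolynomial.eval a Q = F (e a) := by
        intro a
        show MvPolynomial.eval a Q
          = Polynomial.eval (a 0) (q.map (MvPolynomial.eval (Fin.tail a)))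
        conv_lhs => rw [← Fin.cons_self_tail a]
        exact MvPolynomial.eval_eq_eval_mv_eval' _ _ _
      have hmem : ∀ a : Fin (b+1) → ℝ,
          a ∈ box01 (b+1) ↔ (a 0 ∈ Set.Ioc (0:ℝ) 1 ∧ Fin.tail a ∈ box01 b) := by
        intro a
        constructor
        · intro h; exact ⟨h 0, fun j => h j.succ⟩
        · rintro ⟨h0, ht⟩ k
          refine Fin.cases h0 (fun j => ht j) k
      have hFcont : Continuous F := by
        have hFeq : F = fun p : ℝ × (Fin b → ℝ) => MvPolynomial.eval (Fin.cons p.1 p.2) Q := by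
          funext p
          exact (MvPolynomial.eval_eq_eval_mv_eval' _ _ _).symm
        rw [hFeq]
        apply (MvPolynomial.continuous_eval Q).comp
        apply continuous_pi
        intro i
        refine Fin.cases ?_ ?_ i
        · simpa using continuous_fst
        · intro j; simp only [Fin.cons_succ]; exact (continuous_apply j).comp continuous_snd
      have hMP : MeasurePreserving e volume volume :=
        volume_preserving_piFinSuccAbove (fun _ : Fin (b+1) => ℝ) 0
      have hvol : ∀ δ : ℝ,
          volume {a : Fin (b+1) → ℝ | a ∈ box01 (b+1) ∧ |MvPolynomial.eval a Q| < δ}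
          = volume {p : ℝ × (Fin b → ℝ) |
              p.1 ∈ Set.Ioc (0:ℝ) 1 ∧ p.2 ∈ box01 b ∧ |F p| < δ} := by
        intro δ
        have hset : {a : Fin (b+1) → ℝ | a ∈ box01 (b+1) ∧ |MvPolynomial.eval a Q| < δ}
            = e ⁻¹' {p : ℝ × (Fin b → ℝ) |
                p.1 ∈ Set.Ioc (0:ℝ) 1 ∧ p.2 ∈ box01 b ∧ |F p| < δ} := by
          ext a
          simp only [Set.mem_setOf_eq, Set.mem_preimage]
          rw [hmem a, hF a]
          exact and_assoc
        rw [hset]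
        exact hMP.measure_preimage_emb (MeasurableEquiv.measurableEmbedding e) _
      by_cases hd : q.natDegree = 0
      · obtain ⟨g₀, hg₀⟩ := Polynomial.natDegree_eq_zero.mp hd
        have hg₀0 : g₀ ≠ 0 := fun h => hq0 (by rw [← hg₀, h, map_zero])
        obtain ⟨C₁, c₁, hC₁, hc₁, hbound⟩ := IH g₀ hg₀0
        refine ⟨C₁, c₁, hC₁, hc₁, fun δ hδ => ?_⟩
        rw [hvol δ]
        have hTeq : {p : ℝ × (Fin b → ℝ) |
              p.1 ∈ Set.Ioc (0:ℝ) 1 ∧ p.2 ∈ box01 b ∧ |F p| < δ}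
            = Set.Ioc (0:ℝ) 1 ×ˢ
              {s : Fin b → ℝ | s ∈ box01 b ∧ |MvPolynomial.eval s g₀| < δ} := by
          ext p
          simp only [Set.mem_setOf_eq, Set.mem_prod]
          have hFp : F p = MvPolynomial.eval p.2 g₀ := by
            rw [hFdef]
            simp only
            rw [← hg₀, Polynomial.map_C, Polynomial.eval_C]
          rw [hFp]
        rw [hTeq, Measure.volume_eq_prod, Measure.prod_prod, Real.volume_Ioc]
        simp only [sub_zero, ENNReal.ofReal_one, one_mul]
        exact hbound δ hδ
      · have hd1 : 1 ≤ q.natDegree := Nat.one_le_iff_ne_zero.mpr hd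
        set d := q.natDegree with hddef
        have hg : q.leadingCoeff ≠ 0 := Polynomial.leadingCoeff_ne_zero.mpr hq0
        obtain ⟨C₁, c₁, hC₁, hc₁, hbound⟩ := IH q.leadingCoeff hg
        refine ⟨C₁ + 2*d, min (c₁/2) (1/2 * (d:ℝ)⁻¹), by positivity, ?_, fun δ hδ => ?_⟩
        · apply lt_min (by positivity) (by positivity)
        obtain ⟨hδ0, hδ1⟩ := hδ
        set δ' := δ ^ (1/2 : ℝ) with hδ'def
        have hδ'0 : 0 < δ' := Real.rpow_pos_of_pos hδ0 _
        have hδ'1 : δ' < 1 := Real.rpow_lt_one hδ0.le hδ1 (by norm_num)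
        set G : ℝ × (Fin b → ℝ) → ℝ :=
          fun p => MvPolynomial.eval p.2 q.leadingCoeff with hGdef
        have hGcont : Continuous G := (MvPolynomial.continuous_eval _).comp continuous_snd
        set T₁ : Set (ℝ × (Fin b → ℝ)) :=
          (Set.Ioc (0:ℝ) 1 ×ˢ box01 b) ∩ {p | δ' ≤ |G p|} ∩ {p | |F p| < δ} with hT₁def
        set T₂ : Set (ℝ × (Fin b → ℝ)) :=
          Set.Ioc (0:ℝ) 1 ×ˢ
            {s : Fin b → ℝ | s ∈ box01 b ∧ |MvPolynomial.eval s q.leadingCoeff| < δ'} with hT₂def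
        have hsubT : {p : ℝ × (Fin b → ℝ) |
            p.1 ∈ Set.Ioc (0:ℝ) 1 ∧ p.2 ∈ box01 b ∧ |F p| < δ} ⊆ T₁ ∪ T₂ := by
          rintro p ⟨h1, h2, h3⟩
          rcases le_or_gt δ' |G p| with h | h
          · exact Or.inl ⟨⟨⟨h1, h2⟩, h⟩, h3⟩
          · exact Or.inr ⟨h1, h2, h⟩
        have hT₁meas : MeasurableSet T₁ :=
          ((measurableSet_Ioc.prod (box01_measurable b)).inter
            (measurableSet_le measurable_const hGcont.abs.measurable)).inter
            (measurableSet_lt hFcont.abs.measurable measurable_const)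
        have hslice : ∀ s : Fin b → ℝ, volume ((fun x => (x, s)) ⁻¹' T₁)
            ≤ Set.indicator (box01 b)
              (fun _ => ENNReal.ofReal (2 * d * (δ/δ') ^ ((d:ℝ)⁻¹))) s := by
          intro s
          by_cases hs : s ∈ box01 b
          · rw [Set.indicator_of_mem hs]
            by_cases hgs : δ' ≤ |MvPolynomial.eval s q.leadingCoeff|
            · have hcoeff : (q.map (MvPolynomial.eval s)).coeff d
                  = MvPolynomial.eval s q.leadingCoeff := by
                rw [Polynomial.coeff_map]; rfl
              have hcoeffne : (q.map (MvPolynomial.eval s)).coeff d ≠ 0 := by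
                rw [hcoeff]
                intro h
                rw [h, abs_zero] at hgs
                linarith
              have hdeg : (q.map (MvPolynomial.eval s)).natDegree = d :=
                le_antisymm Polynomial.natDegree_map_le
                  (Polynomial.le_natDegree_of_ne_zero hcoeffne)
              have hleadps : (q.map (MvPolynomial.eval s)).leadingCoeff
                  = MvPolynomial.eval s q.leadingCoeff := by
                rw [Polynomial.leadingCoeff, hdeg, hcoeff]
              have hsub2 : (fun x => (x, s)) ⁻¹' T₁
                  ⊆ {x : ℝ | |(q.map (MvPolynomial.eval s)).eval x| < δ} := by
                intro x hx
                exact hx.2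
              refine le_trans (measure_mono hsub2) ?_
              exact oneDim _ d hdeg hd1 δ' δ hδ'0 hδ0 (by rw [hleadps]; exact hgs)
            · have hempty : (fun x => (x, s)) ⁻¹' T₁ = ∅ := by
                ext x
                simp only [Set.mem_preimage, Set.mem_empty_iff_false, iff_false]
                intro hx
                exact hgs hx.1.2
              rw [hempty]
              simp
          · rw [Set.indicator_of_notMem hs]
            have hempty : (fun x => (x, s)) ⁻¹' T₁ = ∅ := by
              ext x
              simp only [Set.mem_preimage, Set.mem_empty_iff_false, iff_false]
              intro hx
              exact hs hx.1.1.2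
            rw [hempty]
            simp
        have hT₁ : volume T₁ ≤ ENNReal.ofReal (2 * d * (δ/δ') ^ ((d:ℝ)⁻¹)) := by
          rw [Measure.volume_eq_prod, Measure.prod_apply_symm hT₁meas]
          calc ∫⁻ s, volume ((fun x => (x, s)) ⁻¹' T₁)
              ≤ ∫⁻ s, Set.indicator (box01 b)
                (fun _ => ENNReal.ofReal (2 * d * (δ/δ') ^ ((d:ℝ)⁻¹))) s :=
                lintegral_mono hslice
            _ = ENNReal.ofReal (2 * d * (δ/δ') ^ ((d:ℝ)⁻¹)) * volume (box01 b) := by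
                rw [lintegral_indicator (box01_measurable b), setLIntegral_const]
            _ = ENNReal.ofReal (2 * d * (δ/δ') ^ ((d:ℝ)⁻¹)) := by
                rw [box01_volume, mul_one]
        have hT₂ : volume T₂ ≤ ENNReal.ofReal (C₁ * δ' ^ c₁) := by
          rw [hT₂def, Measure.volume_eq_prod, Measure.prod_prod, Real.volume_Ioc]
          simp only [sub_zero, ENNReal.ofReal_one, one_mul]
          exact hbound δ' ⟨hδ'0, hδ'1⟩
        rw [hvol δ]
        refine le_trans (measure_mono hsubT) (le_trans (measure_union_le _ _) ?_)
        refine le_trans (add_le_add hT₁ hT₂) ?_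
        rw [← ENNReal.ofReal_add (by positivity) (by positivity)]
        apply ENNReal.ofReal_le_ofReal
        have hdd : δ / δ' = δ ^ (1/2 : ℝ) := by
          rw [hδ'def, div_eq_iff (by positivity), ← Real.rpow_add hδ0]
          norm_num
        have h1 : (δ/δ') ^ ((d:ℝ)⁻¹) = δ ^ (1/2 * (d:ℝ)⁻¹) := by
          rw [hdd, ← Real.rpow_mul hδ0.le]
        have h2 : δ' ^ c₁ = δ ^ (c₁/2) := by
          rw [hδ'def, ← Real.rpow_mul hδ0.le]
          norm_num
          ring_nf
        rw [h1, h2]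
        have hle : ∀ a : ℝ, min (c₁/2) (1/2 * (d:ℝ)⁻¹) ≤ a →
            δ ^ a ≤ δ ^ (min (c₁/2) (1/2 * (d:ℝ)⁻¹)) := fun a ha =>
          Real.rpow_le_rpow_of_exponent_ge hδ0 hδ1.le ha
        calc 2 * d * δ ^ (1/2 * (d:ℝ)⁻¹) + C₁ * δ ^ (c₁/2)
            ≤ 2 * d * δ ^ (min (c₁/2) (1/2 * (d:ℝ)⁻¹))
              + C₁ * δ ^ (min (c₁/2) (1/2 * (d:ℝ)⁻¹)) := by
              apply add_le_add
              · exact mul_le_mul_of_nonneg_left (hle _ (min_le_right _ _)) (by positivity)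
              · exact mul_le_mul_of_nonneg_left (hle _ (min_le_left _ _)) hC₁.le
          _ = (C₁ + 2*d) * δ ^ (min (c₁/2) (1/2 * (d:ℝ)⁻¹)) := by ring


/-- sub-level set estimate for polynomials: if
`P : ℝ^b → ℂ` is a polynomial function (its real and imaginary parts are
polynomials) which is not identically constant, then there are `C, c > 0` such
that for all `ε ∈ (0,1)` the Lebesgue measure of
`{a ∈ (0,1]^b : |P(a)| < ε}` is at most `C ε^c`. -/
theorem polynomial_sublevel_measure
    (b : ℕ) (hb : 1 ≤ b) (P : (Fin b → ℝ) → ℂ)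
    (Pre Pim : MvPolynomial (Fin b) ℝ)
    (hP : ∀ a, P a = ((MvPolynomial.eval a Pre : ℝ) : ℂ)
        + ((MvPolynomial.eval a Pim : ℝ) : ℂ) * Complex.I)
    (hnonconst : ∃ x y, P x ≠ P y) :
    ∃ C c : ℝ, 0 < C ∧ 0 < c ∧ ∀ ε : ℝ, ε ∈ Set.Ioo (0:ℝ) 1 →
      volume {a : Fin b → ℝ | a ∈ box01 b ∧ ‖P a‖ < ε} ≤ ENNReal.ofReal (C * ε ^ c) := by
  obtain ⟨x, y, hxy⟩ := hnonconst
  have hre : ∀ a, (P a).re = MvPolynomial.eval a Pre := by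
    intro a; rw [hP a]; simp
  have him : ∀ a, (P a).im = MvPolynomial.eval a Pim := by
    intro a; rw [hP a]; simp
  have hcases : MvPolynomial.eval x Pre ≠ MvPolynomial.eval y Pre
      ∨ MvPolynomial.eval x Pim ≠ MvPolynomial.eval y Pim := by
    by_contra h
    push_neg at h
    apply hxy
    rw [hP x, hP y, h.1, h.2]
  obtain ⟨R, hRne, hRle⟩ : ∃ R : MvPolynomial (Fin b) ℝ,
      R ≠ 0 ∧ ∀ a, |MvPolynomial.eval a R| ≤ ‖P a‖ := by
    rcases hcases with h | h
    · refine ⟨Pre, fun h0 => h (by rw [h0]; simp), fun a => ?_⟩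
      calc |MvPolynomial.eval a Pre| = |(P a).re| := by rw [hre a]
        _ ≤ ‖P a‖ := Complex.abs_re_le_norm _
        _ = ‖P a‖ := rfl
    · refine ⟨Pim, fun h0 => h (by rw [h0]; simp), fun a => ?_⟩
      calc |MvPolynomial.eval a Pim| = |(P a).im| := by rw [him a]
        _ ≤ ‖P a‖ := Complex.abs_im_le_norm _
        _ = ‖P a‖ := rfl
  obtain ⟨C, c, hC, hc, hball⟩ := mv_sublevel b R hRne
  refine ⟨C, c, hC, hc, fun ε hε => ?_⟩
  refine le_trans (measure_mono ?_) (hball ε hε)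
  rintro a ⟨ha1, ha2⟩
  exact ⟨ha1, lt_of_le_of_lt (hRle a) ha2⟩

end NLSQP
end

section
/- Fix integers b, d, p ≥ 1 and the standard basis e_1, …, e_b of ℤ^b. Fix combinatorial data consisting of d + 2 summands, each of which is of type Γ⁺⁺ (given by natural numbers p_{kk'} with Σ p_{kk'} ≤ p), of type Γ⁺⁻ (given by p_{kk'} with Σ p_{kk'} ≤ p − 1 and indices κ, κ') or of type Γ⁻⁺ (likewise), and define, for a tuple 𝐣 = (j_1, …, j_b) ∈ (ℝ^d)^b, the pair (Δn, Δj(𝐣)) as the corresponding sum: each Γ⁺⁺ summand contributes (−Σ p_{kk'}(e_k − e_{k'}), Σ p_{kk'}(j_k − j_{k'})), each Γ⁺⁻ summand contributes in addition (−(e_κ + e_{κ'}), +(j_κ + j_{κ'})), and each Γ⁻⁺ summand contributes in addition (+(e_κ + e_{κ'}), −(j_κ + j_{κ'})); note Δn ∈ ℤ^b does not depend on 𝐣 and 𝐣 ↦ Δj(𝐣) is linear. Set ω⁰(𝐣) = (|j_1|², …, |j_b|²). If Δn ≠ 0 or the linear map 𝐣 ↦ Δj(𝐣) is not identically zero, then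 each of the two polynomial functions 𝐣 ↦ |Δj(𝐣)|² + Δn·ω⁰(𝐣) and 𝐣 ↦ |Δj(𝐣)|² − Δn·ω⁰(𝐣) is not identically zero on (ℝ^d)^b. -/
open scoped BigOperators

namespace NLSQP

/-- the standard basis vector `e_k` of `ℤ^b`. -/
def eB (b : ℕ) (k : Fin b) : Fin b → ℤ := Pi.single k 1

/-- `ω⁰(𝐣) = (|j_1|², …, |j_b|²)`. -/
def omega0 {b d : ℕ} (j : Fin b → Fin d → ℝ) : Fin b → ℝ :=
  fun k => ∑ i, j k i * j k i

def dotN {b : ℕ} (n : Fin b → ℤ) (w : Fin b → ℝ) : ℝ := ∑ k, (n k : ℝ) * w k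

def dotJ {d : ℕ} (x y : Fin d → ℝ) : ℝ := ∑ i, x i * y i

/-- the `Δn`-part of the sum of `d+2` summands determined by the combinatorial
datum `(t, Pm, κ, κ')`: summand `i` is of type `Γ⁺⁺` if `t i = 0`, of type
`Γ⁺⁻` if `t i = 1`, of type `Γ⁻⁺` otherwise. -/
def Dn (b d : ℕ) (t : Fin (d+2) → Fin 3) (Pm : Fin (d+2) → Fin b → Fin b → ℕ)
    (κ κ' : Fin (d+2) → Fin b) : Fin b → ℤ :=
  ∑ i, ((-∑ k, ∑ k', (Pm i k k' : ℤ) • (eB b k - eB b k')) +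
    (if t i = 1 then -(eB b (κ i) + eB b (κ' i))
     else if t i = 2 then eB b (κ i) + eB b (κ' i) else 0))

/-- the `Δj`-part, a linear function of the tuple `𝐣 = (j_1, …, j_b)`. -/
def Dj (b d : ℕ) (t : Fin (d+2) → Fin 3) (Pm : Fin (d+2) → Fin b → Fin b → ℕ)
    (κ κ' : Fin (d+2) → Fin b) (J : Fin b → Fin d → ℝ) : Fin d → ℝ :=
  ∑ i, ((∑ k, ∑ k', (Pm i k k' : ℤ) • (J k - J k')) +
    (if t i = 1 then J (κ i) + J (κ' i)
     else if t i = 2 then -(J (κ i) + J (κ' i)) else 0))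

/- ### Auxiliary lemmas -/

lemma eB_sum (b : ℕ) (k₀ : Fin b) (g : Fin b → ℝ) :
    ∑ k, ((eB b k₀ k : ℝ) * g k) = g k₀ := by
  simp [eB, Pi.single_apply, ite_mul]

lemma pm_part (b d : ℕ) (P : Fin b → Fin b → ℕ) (J : Fin b → Fin d → ℝ) (i : Fin d) :
    ∑ x : Fin b, (∑ k₁, ∑ k₂, (P k₁ k₂ : ℝ) * ((eB b k₁ x : ℝ) - (eB b k₂ x : ℝ))) * J x i
    = ∑ k₁, ∑ k₂, (P k₁ k₂ : ℝ) * (J k₁ i - J k₂ i) := by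
  simp only [Finset.sum_mul]
  rw [Finset.sum_comm]
  apply Finset.sum_congr rfl
  intro k₁ _
  rw [Finset.sum_comm]
  apply Finset.sum_congr rfl
  intro k₂ _
  have h : ∀ x : Fin b, (P k₁ k₂ : ℝ) * ((eB b k₁ x : ℝ) - (eB b k₂ x : ℝ)) * J x i
      = (P k₁ k₂ : ℝ) * ((eB b k₁ x : ℝ) * J x i) - (P k₁ k₂ : ℝ) * ((eB b k₂ x : ℝ) * J x i) := by
    intro x; ring
  simp only [h, Finset.sum_sub_distrib, ← Finset.mul_sum, eB_sum]
  ring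

lemma tp_part (b d : ℕ) (u u' : Fin b) (J : Fin b → Fin d → ℝ) (i : Fin d) :
    ∑ x : Fin b, ((eB b u x : ℝ) + (eB b u' x : ℝ)) * J x i = J u i + J u' i := by
  simp only [add_mul, Finset.sum_add_distrib, eB_sum]

lemma summand_eq (b : ℕ) (P : Fin b → Fin b → ℕ) (u u' : Fin b) (tv : Fin 3)
    (d : ℕ) (J : Fin b → Fin d → ℝ) (i : Fin d) :
    ((∑ k, ∑ k', (P k k' : ℤ) • (J k - J k')) +
      (if tv = 1 then J u + J u'
       else if tv = 2 then -(J u + J u') else 0)) i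
    = ∑ k, -((((-∑ k₁, ∑ k₂, (P k₁ k₂ : ℤ) • (eB b k₁ - eB b k₂)) +
        (if tv = 1 then -(eB b u + eB b u')
         else if tv = 2 then eB b u + eB b u' else 0)) k : ℝ) * J k i) := by
  have key : ∀ k : Fin b,
      -((((-∑ k₁, ∑ k₂, (P k₁ k₂ : ℤ) • (eB b k₁ - eB b k₂)) +
        (if tv = 1 then -(eB b u + eB b u')
         else if tv = 2 then eB b u + eB b u' else 0)) k : ℝ) * J k i)
      = (∑ k₁, ∑ k₂, (P k₁ k₂ : ℝ) * ((eB b k₁ k : ℝ) - (eB b k₂ k : ℝ))) * J k i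
        + ((if tv = 1 then ((eB b u k : ℝ) + (eB b u' k : ℝ))
           else if tv = 2 then -((eB b u k : ℝ) + (eB b u' k : ℝ)) else 0)) * J k i := by
    intro k
    split_ifs <;>
      simp only [Pi.add_apply, Pi.neg_apply, Pi.zero_apply, Finset.sum_apply, Pi.sub_apply,
        Pi.smul_apply, smul_eq_mul] <;>
      push_cast <;> ring
  simp only [key, Finset.sum_add_distrib, pm_part]
  split_ifs with h1 h2 <;>
    simp only [Pi.add_apply, Pi.neg_apply, Pi.zero_apply, Finset.sum_apply, Pi.sub_apply,
      Pi.smul_apply, smul_eq_mul, zsmul_eq_mul, neg_mul, zero_mul, Finset.sum_neg_distrib,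
      Finset.sum_const_zero, tp_part] <;>
    push_cast [Pi.mul_apply, Pi.sub_apply, mul_sub, Pi.intCast_apply, Pi.natCast_apply] <;> ring

/-- `Δj(J) = -∑_k Δn_k · J_k`. -/
lemma dj_eq (b d : ℕ) (t : Fin (d+2) → Fin 3) (Pm : Fin (d+2) → Fin b → Fin b → ℕ)
    (κ κ' : Fin (d+2) → Fin b) (J : Fin b → Fin d → ℝ) (i : Fin d) :
    Dj b d t Pm κ κ' J i = -∑ k, ((Dn b d t Pm κ κ' k : ℝ) * J k i) := by
  unfold Dj Dn
  rw [Finset.sum_apply]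
  have h1 : ∀ k : Fin b,
      (((∑ s, ((-∑ k₁, ∑ k₂, (Pm s k₁ k₂ : ℤ) • (eB b k₁ - eB b k₂)) +
        (if t s = 1 then -(eB b (κ s) + eB b (κ' s))
         else if t s = 2 then eB b (κ s) + eB b (κ' s) else 0))) k : ℝ) * J k i)
      = ∑ s, (((((-∑ k₁, ∑ k₂, (Pm s k₁ k₂ : ℤ) • (eB b k₁ - eB b k₂)) +
        (if t s = 1 then -(eB b (κ s) + eB b (κ' s))
         else if t s = 2 then eB b (κ s) + eB b (κ' s) else 0))) k : ℝ) * J k i) := by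
    intro k
    rw [Finset.sum_apply]
    push_cast
    rw [Finset.sum_mul]
  simp only [h1]
  rw [Finset.sum_comm, ← Finset.sum_neg_distrib]
  apply Finset.sum_congr rfl
  intro s _
  rw [← Finset.sum_neg_distrib]
  exact summand_eq b (Pm s) (κ s) (κ' s) (t s) d J i

/-- the sum of the entries of `Δn` is even. -/
lemma dn_even (b d : ℕ) (t : Fin (d+2) → Fin 3) (Pm : Fin (d+2) → Fin b → Fin b → ℕ)
    (κ κ' : Fin (d+2) → Fin b) :
    Even (∑ k, Dn b d t Pm κ κ' k) := by
  unfold Dn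
  have h1 : ∀ k₀ : Fin b, ∑ k, eB b k₀ k = 1 := by
    intro k₀; simp [eB, Pi.single_apply]
  have key : (∑ k, ∑ s, ((-∑ k₁, ∑ k₂, (Pm s k₁ k₂ : ℤ) • (eB b k₁ - eB b k₂)) +
      (if t s = 1 then -(eB b (κ s) + eB b (κ' s))
       else if t s = 2 then eB b (κ s) + eB b (κ' s) else 0)) k)
      = ∑ s : Fin (d+2), (if t s = 1 then (-2 : ℤ) else if t s = 2 then 2 else 0) := by
    rw [Finset.sum_comm]
    apply Finset.sum_congr rfl
    intro s _
    have expand : ∀ k : Fin b, ((-∑ k₁, ∑ k₂, (Pm s k₁ k₂ : ℤ) • (eB b k₁ - eB b k₂)) +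
        (if t s = 1 then -(eB b (κ s) + eB b (κ' s))
         else if t s = 2 then eB b (κ s) + eB b (κ' s) else 0)) k
        = (-∑ k₁, ∑ k₂, (Pm s k₁ k₂ : ℤ) * (eB b k₁ k - eB b k₂ k)) +
          (if t s = 1 then -(eB b (κ s) k + eB b (κ' s) k)
           else if t s = 2 then eB b (κ s) k + eB b (κ' s) k else 0) := by
      intro k
      split_ifs <;>
        simp [Finset.sum_apply, Pi.smul_apply, Pi.sub_apply, smul_eq_mul]
    simp only [expand]
    rw [Finset.sum_add_distrib]
    have hpair : ∀ k₁ k₂ : Fin b, ∑ k, (Pm s k₁ k₂ : ℤ) * (eB b k₁ k - eB b k₂ k) = 0 := by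
      intro k₁ k₂
      simp [mul_sub, Finset.sum_sub_distrib, ← Finset.mul_sum, h1]
    have hz : ∑ k : Fin b, (-∑ k₁, ∑ k₂, (Pm s k₁ k₂ : ℤ) * (eB b k₁ k - eB b k₂ k)) = 0 := by
      rw [Finset.sum_neg_distrib, neg_eq_zero, Finset.sum_comm]
      apply Finset.sum_eq_zero
      intro k₁ _
      rw [Finset.sum_comm]
      exact Finset.sum_eq_zero fun k₂ _ => hpair k₁ k₂
    rw [hz, zero_add]
    split_ifs <;> simp [Finset.sum_add_distrib, Finset.sum_neg_distrib, h1]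
  simp only [Finset.sum_apply]
  rw [key]
  apply Finset.even_sum
  intro s _
  split_ifs <;> decide

/-- key arithmetic lemma: for `n ≠ 0` with even entry sum and `ε = ±1`, some real
weight vector `w` makes `(∑ n_k w_k)² + ε ∑ n_k w_k²` nonzero. -/
lemma exists_w (b : ℕ) (n : Fin b → ℤ) (hn : n ≠ 0) (he : Even (∑ k, n k))
    (ε : ℤ) (hε : ε = 1 ∨ ε = -1) :
    ∃ w : Fin b → ℝ, ((∑ k, (n k : ℝ) * w k))^2
      + (ε : ℝ) * (∑ k, (n k : ℝ) * (w k * w k)) ≠ 0 := by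
  have hone : ∀ k₀ : Fin b, ∑ k, (n k : ℝ) * (if k = k₀ then (1:ℝ) else 0) = n k₀ := by
    intro k₀; simp [mul_ite]
  by_cases hA : ∃ k, n k ≠ 0 ∧ n k ≠ -ε
  · obtain ⟨k₀, h0, h1⟩ := hA
    refine ⟨fun k => if k = k₀ then 1 else 0, ?_⟩
    have hsq : ∀ k : Fin b, (if k = k₀ then (1:ℝ) else 0) * (if k = k₀ then (1:ℝ) else 0)
        = (if k = k₀ then (1:ℝ) else 0) := by intro k; split_ifs <;> ring
    simp only [hsq, hone]
    have : ((n k₀ : ℝ))^2 + (ε:ℝ) * (n k₀) = ((n k₀ * (n k₀ + ε) : ℤ) : ℝ) := by push_cast; ring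
    rw [this]
    rw [Int.cast_ne_zero]
    exact mul_ne_zero h0 (by omega)
  · push_neg at hA
    have hval : ∀ k, n k = 0 ∨ n k = -ε := by
      intro k; by_cases h : n k = 0
      · exact Or.inl h
      · exact Or.inr (hA k h)
    obtain ⟨k₀, h0⟩ : ∃ k, n k ≠ 0 := by
      by_contra h; push_neg at h; exact hn (funext fun k => h k)
    have hk0 : n k₀ = -ε := (hval k₀).resolve_left h0
    obtain ⟨k₁, hne, h1⟩ : ∃ k₁, k₁ ≠ k₀ ∧ n k₁ = -ε := by
      by_contra h; push_neg at h
      have hz : ∀ k₁, k₁ ≠ k₀ → n k₁ = 0 := by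
        intro k₁ hk
        rcases hval k₁ with h' | h'
        · exact h'
        · exact absurd h' (h k₁ hk)
      have : ∑ k, n k = n k₀ := Finset.sum_eq_single k₀ (fun k _ hk => hz k hk)
        (fun h => absurd (Finset.mem_univ k₀) h)
      rw [this, hk0] at he
      rcases hε with h | h <;> subst h <;> revert he <;> decide
    refine ⟨fun k => if k = k₀ ∨ k = k₁ then 1 else 0, ?_⟩
    have hsq : ∀ k : Fin b, (if k = k₀ ∨ k = k₁ then (1:ℝ) else 0) * (if k = k₀ ∨ k = k₁ then (1:ℝ) else 0)
        = (if k = k₀ ∨ k = k₁ then (1:ℝ) else 0) := by intro k; split_ifs <;> ring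
    have hsum : ∑ k, (n k : ℝ) * (if k = k₀ ∨ k = k₁ then (1:ℝ) else 0) = (n k₀ : ℝ) + n k₁ := by
      have hsplit : ∀ k : Fin b, (n k : ℝ) * (if k = k₀ ∨ k = k₁ then (1:ℝ) else 0)
          = (if k = k₀ then (n k : ℝ) else 0) + (if k = k₁ then (n k : ℝ) else 0) := by
        intro k
        by_cases h0' : k = k₀ <;> by_cases h1' : k = k₁
        · exact absurd (h0'.symm.trans h1') hne.symm
        all_goals simp [h0', h1', hne, hne.symm]
      simp only [hsplit, Finset.sum_add_distrib]
      simp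
    simp only [hsq, hsum, hk0, h1]
    have : ((-ε : ℤ):ℝ) + ((-ε : ℤ):ℝ) = ((-2*ε : ℤ):ℝ) := by push_cast; ring
    rw [this]
    have hε2 : (ε:ℝ) * (ε:ℝ) = 1 := by rcases hε with h | h <;> subst h <;> norm_num
    have : (((-2*ε : ℤ)):ℝ)^2 + (ε:ℝ) * ((-2*ε:ℤ):ℝ) = 2 := by push_cast; nlinarith [hε2]
    rw [this]; norm_num

/-- non-degeneracy of `Σ± = |Δj|² ± Δn·ω⁰`: for any
nontrivial combinatorial datum of `d+2` summands of types `Γ⁺⁺`, `Γ⁺⁻`, `Γ⁻⁺`,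
the polynomial functions `𝐣 ↦ |Δj(𝐣)|² ± Δn·ω⁰(𝐣)` on `(ℝ^d)^b` are not
identically zero. -/
theorem sigma_pm_not_identically_zero
    (b d p : ℕ) (hb : 1 ≤ b) (hd : 1 ≤ d) (hp : 1 ≤ p)
    (t : Fin (d+2) → Fin 3) (Pm : Fin (d+2) → Fin b → Fin b → ℕ)
    (κ κ' : Fin (d+2) → Fin b)
    (hdeg : ∀ i, (t i = 0 → (∑ k, ∑ k', Pm i k k') ≤ p) ∧
      (t i ≠ 0 → (∑ k, ∑ k', Pm i k k') + 1 ≤ p))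
    (hnontriv : Dn b d t Pm κ κ' ≠ 0 ∨ ∃ J : Fin b → Fin d → ℝ, Dj b d t Pm κ κ' J ≠ 0) :
    (∃ J : Fin b → Fin d → ℝ,
      dotJ (Dj b d t Pm κ κ' J) (Dj b d t Pm κ κ' J)
        + dotN (Dn b d t Pm κ κ') (omega0 J) ≠ 0) ∧
    (∃ J : Fin b → Fin d → ℝ,
      dotJ (Dj b d t Pm κ κ' J) (Dj b d t Pm κ κ' J)
        - dotN (Dn b d t Pm κ κ') (omega0 J) ≠ 0) := by
  set n : Fin b → ℤ := Dn b d t Pm κ κ' with hn_def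
  have hdj : ∀ (J : Fin b → Fin d → ℝ) (i : Fin d),
      Dj b d t Pm κ κ' J i = -∑ k, ((n k : ℝ) * J k i) := fun J i => dj_eq b d t Pm κ κ' J i
  have hn : n ≠ 0 := by
    rcases hnontriv with h | ⟨J, hJ⟩
    · exact h
    · intro h0
      apply hJ
      funext i
      rw [hdj, h0]
      simp
  set i₀ : Fin d := ⟨0, hd⟩ with hi₀
  -- evaluation of the two quadratic quantities on tuples supported on coordinate `i₀`
  have hval : ∀ w : Fin b → ℝ,
      dotJ (Dj b d t Pm κ κ' (fun k i => if i = i₀ then w k else 0))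
          (Dj b d t Pm κ κ' (fun k i => if i = i₀ then w k else 0))
        = (∑ k, (n k : ℝ) * w k)^2
      ∧ dotN n (omega0 (fun k i => if i = i₀ then w k else 0))
        = ∑ k, (n k : ℝ) * (w k * w k) := by
    intro w
    have hDji : ∀ i : Fin d, Dj b d t Pm κ κ' (fun k i => if i = i₀ then w k else 0) i
        = if i = i₀ then -∑ k, (n k : ℝ) * w k else 0 := by
      intro i
      rw [hdj]
      split_ifs with h <;> simp [h]
    constructor
    · unfold dotJ
      simp only [hDji]
      have : ∀ i : Fin d, (if i = i₀ then -∑ k, (n k : ℝ) * w k else 0) *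
          (if i = i₀ then -∑ k, (n k : ℝ) * w k else 0)
          = if i = i₀ then (∑ k, (n k : ℝ) * w k)^2 else 0 := by
        intro i; split_ifs <;> ring
      simp only [this]
      simp
    · unfold dotN omega0
      apply Finset.sum_congr rfl
      intro k _
      congr 1
      have : ∀ i : Fin d, (if i = i₀ then w k else 0) * (if i = i₀ then w k else 0)
          = if i = i₀ then w k * w k else 0 := by
        intro i; split_ifs <;> ring
      simp only [this]
      simp
  have heven : Even (∑ k, n k) := dn_even b d t Pm κ κ'
  constructor
  · obtain ⟨w, hw⟩ := exists_w b n hn heven 1 (Or.inl rfl)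
    refine ⟨fun k i => if i = i₀ then w k else 0, ?_⟩
    rw [(hval w).1, (hval w).2]
    simpa using hw
  · obtain ⟨w, hw⟩ := exists_w b n hn heven (-1) (Or.inr rfl)
    refine ⟨fun k i => if i = i₀ then w k else 0, ?_⟩
    rw [(hval w).1, (hval w).2]
    intro h
    apply hw
    push_cast
    linarith [h]

end NLSQP
end

section
/- Let b, d ≥ 1, let j_1, …, j_b ∈ ℤ^d, let e_1, …, e_b be the standard basis of ℤ^b, and set ω⁰ = (|j_1|², …, |j_b|²) ∈ ℤ^b. Suppose n, n' ∈ ℤ^b, j, j' ∈ ℤ^d and k, k' ∈ {1, …, b} satisfy −n·ω⁰ + |j|² = 0, n'·ω⁰ + |j'|² = 0, n' = n − e_k − e_{k'} and j' = j + j_k + j_{k'}. Then (j + j_k) · (j + j_{k'}) = 0. -/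
open scoped BigOperators

namespace NLSQP

/-- resonance identity (5.2) for the cubic nonlinearity:
if `(n, j)` lies on the bi-characteristic `{−n·ω⁰ + |j|² = 0}`, `(n', j')` lies
on the conjugate bi-characteristic `{n'·ω⁰ + |j'|² = 0}`, and they are connected
by the shift `(n', j') = (n, j) + (−e_k − e_{k'}, j_k + j_{k'})`, then
`(j + j_k)·(j + j_{k'}) = 0`. -/
theorem resonance_identity_cubic_uu
    (b d : ℕ) (hb : 1 ≤ b) (hd : 1 ≤ d)
    (j : Fin b → Fin d → ℤ)
    (n n' : Fin b → ℤ) (jj jj' : Fin d → ℤ) (k k' : Fin b)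
    (h1 : -(∑ m, n m * (∑ i, j m i * j m i)) + (∑ i, jj i * jj i) = 0)
    (h2 : (∑ m, n' m * (∑ i, j m i * j m i)) + (∑ i, jj' i * jj' i) = 0)
    (hn : n' = n - eB b k - eB b k')
    (hj : jj' = jj + j k + j k') :
    (∑ i, (jj i + j k i) * (jj i + j k' i)) = 0 := by
  subst hn hj
  have hk : ∀ kk : Fin b, ∑ m, (Pi.single kk (1:ℤ) : Fin b → ℤ) m * (∑ i, j m i * j m i)
      = ∑ i, j kk i * j kk i := by
    intro kk
    simp [Pi.single_apply, ite_mul, Finset.sum_ite_eq']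
  simp only [Pi.sub_apply, Pi.add_apply, sub_mul, Finset.sum_sub_distrib, eB] at h2
  rw [hk k, hk k'] at h2
  have e2 : ∑ i, (jj i + j k i + j k' i) * (jj i + j k i + j k' i)
      = ∑ i, j k i * j k i + ∑ i, j k' i * j k' i
        + 2 * ∑ i, (jj i + j k i) * (jj i + j k' i) - ∑ i, jj i * jj i := by
    rw [Finset.mul_sum, ← Finset.sum_add_distrib, ← Finset.sum_add_distrib,
      ← Finset.sum_sub_distrib]
    exact Finset.sum_congr rfl fun i _ => by ring
  linarith [h1, h2, e2]

end NLSQP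
end
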